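/- Let p be a prime and t ≥ 0. Suppose (H_m)_{m≥1} is a family of abelian groups where each H_m is a ℤ/p^mℤ-module, H_1 is a free ℤ/pℤ-module of rank t, and for each m ≥ 2 there is a short exact sequence 0 → H_{m−1} → H_m → H_1 → 0 in which the image of H_{m−1} equals the p^{m−1}-torsion submodule H_m[p^{m−1}]. Then each H_m is a free ℤ/p^mℤ-module of rank t. -/

import Mathlib

/-!
Write `M = H (m+1)`, `K = f(H m) = M[p^(m+1)]`. The torsion `M[p]` lies in `K ≅ (ℤ/p^(m+1))^t`,
so it has at most `p^t` elements; since `|M| = p^t |K|`, counting the kernel and image of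
multiplication by `p` gives `p M = K = ker g`. Lifts of `t` generators of `H 0` therefore generate
`M` modulo `p M`, hence generate `M` because `p` is nilpotent on `M` (Nakayama). A module over
`ℤ/p^(m+2)` spanned by `t` elements with exactly `p^((m+2)t)` elements is free of rank `t`.
-/

open Function Set

section

variable {M : Type*} [AddCommGroup M]

theorem AddSubgroup.toZModSubmodule_closure (n : ℕ) [Module (ZMod n) M] (s : Set M) :
    AddSubgroup.toZModSubmodule n (AddSubgroup.closure s) = Submodule.span (ZMod n) s :=
  le_antisymm
    ((AddSubgroup.closure_le (Submodule.span (ZMod n) s).toAddSubgroup).mpr Submodule.subset_span)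
    (Submodule.span_le.mpr (AddSubgroup.subset_closure (k := s)))

theorem exists_closure_range_eq_top {n : ℕ} {ι : Type*} [Finite ι] [Module (ZMod n) M]
    (e : M ≃ₗ[ZMod n] (ι → ZMod n)) : ∃ a : ι → M, AddSubgroup.closure (range a) = ⊤ := by
  let a := (Pi.basisFun (ZMod n) ι).map e.symm
  refine ⟨a, (AddSubgroup.toZModSubmodule n).injective ?_⟩
  rw [AddSubgroup.toZModSubmodule_closure, a.span_eq, map_top]

theorem AddSubgroup.eq_top_of_forall_eq_add_nsmul {n N : ℕ} {S : AddSubgroup M}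
    (hN : ∀ x : M, n ^ N • x = 0) (h : ∀ x : M, ∃ s ∈ S, ∃ z, x = s + n • z) : S = ⊤ := by
  have hpow : ∀ k, ∀ x : M, ∃ s ∈ S, ∃ z, x = s + n ^ k • z := by
    intro k
    induction k with
    | zero => exact fun x => ⟨0, S.zero_mem, x, by simp⟩
    | succ k ih =>
      intro x
      obtain ⟨s, hs, z, rfl⟩ := ih x
      obtain ⟨s', hs', z', rfl⟩ := h z
      refine ⟨s + n ^ k • s', S.add_mem hs (S.nsmul_mem hs' _), z', ?_⟩
      rw [smul_add, smul_smul, ← pow_succ, add_assoc]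
  refine eq_top_iff.mpr fun x _ => ?_
  obtain ⟨s, hs, z, rfl⟩ := hpow N x
  simpa [hN z] using hs

theorem AddSubgroup.eq_top_of_map_eq_top {B : Type*} [AddCommGroup B] {n N : ℕ}
    (hN : ∀ x : M, n ^ N • x = 0) {g : M →+ B} (hker : ∀ x ∈ g.ker, ∃ z, n • z = x)
    {S : AddSubgroup M} (hS : S.map g = ⊤) : S = ⊤ := by
  refine eq_top_of_forall_eq_add_nsmul hN fun x => ?_
  obtain ⟨s, hs, hsx⟩ := (AddSubgroup.mem_map (f := g)).mp (hS ▸ AddSubgroup.mem_top (g x))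
  obtain ⟨z, hz⟩ := hker (x - s) (by simp [hsx])
  exact ⟨s, hs, z, by rw [hz, add_sub_cancel]⟩

theorem AddMonoidHom.card_eq_mul_of_exact {A B : Type*} [AddCommGroup A] [AddCommGroup B]
    {f : A →+ M} {g : M →+ B} (hf : Injective f) (hg : Surjective g) (hexact : g.ker = f.range) :
    Nat.card M = Nat.card B * Nat.card A := by
  rw [AddSubgroup.card_eq_card_quotient_mul_card_addSubgroup g.ker,
    Nat.card_congr (QuotientAddGroup.quotientKerEquivOfSurjective g hg).toEquiv, hexact,
    Nat.card_congr (AddMonoidHom.ofInjective hf).toEquiv.symm]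

theorem card_nsmul_eq_zero_le_of_injective {A : Type*} [AddCommGroup A] [Finite A] (n : ℕ)
    {f : A →+ M} (hf : Injective f) (hrange : ∀ x : M, n • x = 0 → x ∈ f.range) :
    Nat.card {x : M // n • x = 0} ≤ Nat.card {a : A // n • a = 0} := by
  refine Nat.card_le_card_of_surjective (fun a => ⟨f a, by rw [← map_nsmul, a.2, map_zero]⟩) ?_
  rintro ⟨x, hx⟩
  obtain ⟨a, rfl⟩ := hrange x hx
  exact ⟨⟨a, hf (by rwa [map_nsmul, map_zero])⟩, rfl⟩

theorem exists_nsmul_eq_of_card_le [Finite M] {n c : ℕ} {K : AddSubgroup M}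
    (hnK : ∀ x : M, n • x ∈ K) (htor : Nat.card {x : M // n • x = 0} ≤ c)
    (hcard : c * Nat.card K ≤ Nat.card M) : ∀ x ∈ K, ∃ z, n • z = x := by
  let δ : M →+ M := DistribSMul.toAddMonoidHom M n
  have hδ : Nat.card M = Nat.card δ.range * Nat.card δ.ker := by
    rw [AddSubgroup.card_eq_card_quotient_mul_card_addSubgroup δ.ker,
      Nat.card_congr (QuotientAddGroup.quotientKerEquivRange δ).toEquiv]
  have hker : Nat.card δ.ker ≤ c := htor
  have hle : δ.range ≤ K := by rintro _ ⟨x, rfl⟩; exact hnK x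
  have hrange : δ.range = K := by
    refine AddSubgroup.eq_of_le_of_card_ge hle
      (Nat.le_of_mul_le_mul_left ?_ (Nat.card_pos (α := δ.ker)))
    calc Nat.card δ.ker * Nat.card K ≤ c * Nat.card K := Nat.mul_le_mul_right _ hker
      _ ≤ Nat.card M := hcard
      _ = Nat.card δ.ker * Nat.card δ.range := by rw [hδ, mul_comm]
  intro x hx
  rw [← hrange] at hx
  obtain ⟨z, rfl⟩ := hx
  exact ⟨z, rfl⟩

theorem ZMod.card_nsmul_eq_zero_le {p : ℕ} (hp : 0 < p) (m : ℕ) :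
    Nat.card {a : ZMod (p ^ (m + 1)) // p • a = 0} ≤ p := by
  have : NeZero (p ^ (m + 1)) := ⟨by positivity⟩
  have hdvd (a : ZMod (p ^ (m + 1))) (ha : p • a = 0) : p ^ m ∣ a.val := by
    have : p * p ^ m ∣ p * a.val := by
      rw [← pow_succ', ← ZMod.natCast_eq_zero_iff]
      push_cast [ZMod.natCast_zmod_val, ← nsmul_eq_mul]
      exact ha
    exact Nat.dvd_of_mul_dvd_mul_left hp this
  have hlt (a : ZMod (p ^ (m + 1))) : a.val / p ^ m < p := by
    rw [Nat.div_lt_iff_lt_mul (by positivity), ← pow_succ']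
    exact ZMod.val_lt a
  calc _ ≤ Nat.card (Fin p) := by
        refine Nat.card_le_card_of_injective (fun a => (⟨a.1.val / p ^ m, hlt a⟩ : Fin p)) ?_
        rintro ⟨a, ha⟩ ⟨b, hb⟩ hab
        have hab : a.val / p ^ m = b.val / p ^ m := Fin.mk.inj_iff.mp hab
        refine Subtype.ext (ZMod.val_injective _ ?_)
        rw [← Nat.div_mul_cancel (hdvd a ha), ← Nat.div_mul_cancel (hdvd b hb), hab]
    _ = p := Nat.card_fin p

theorem card_pi_nsmul_eq_zero {A ι : Type*} [AddCommGroup A] [Fintype ι] (n : ℕ) :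
    Nat.card {w : ι → A // n • w = 0} = Nat.card {a : A // n • a = 0} ^ Fintype.card ι := by
  rw [← Nat.card_eq_fintype_card, ← Nat.card_fun]
  refine Nat.card_congr ((Equiv.subtypeEquivRight fun w => ?_).trans (Equiv.subtypePiEquivPi))
  exact funext_iff

theorem card_nsmul_eq_zero_le_of_linearEquiv {p m t : ℕ} (hp : 0 < p)
    [Module (ZMod (p ^ (m + 1))) M] (e : M ≃ₗ[ZMod (p ^ (m + 1))] (Fin t → ZMod (p ^ (m + 1)))) :
    Nat.card {x : M // p • x = 0} ≤ p ^ t := by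
  have : NeZero (p ^ (m + 1)) := ⟨by positivity⟩
  calc _ ≤ Nat.card {w : Fin t → ZMod (p ^ (m + 1)) // p • w = 0} :=
        card_nsmul_eq_zero_le_of_injective p (f := e.symm.toLinearMap.toAddMonoidHom)
          e.symm.injective fun x _ => ⟨e x, by simp⟩
    _ = Nat.card {c : ZMod (p ^ (m + 1)) // p • c = 0} ^ t := by
      rw [card_pi_nsmul_eq_zero, Fintype.card_fin]
    _ ≤ p ^ t := Nat.pow_le_pow_left (ZMod.card_nsmul_eq_zero_le hp m) t

theorem nonempty_linearEquiv_pi_of_span_eq_top {R ι : Type*} [Ring R] [Finite R] [Module R M]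
    [Fintype ι] {b : ι → M} (hb : Submodule.span R (range b) = ⊤)
    (hcard : Nat.card M = Nat.card (ι → R)) : Nonempty (M ≃ₗ[R] (ι → R)) := by
  have hsurj := (span_range_eq_top_iff_surjective_fintypeLinearCombination R b).mp hb
  have hbij := (Nat.bijective_iff_surjective_and_card _).mpr ⟨hsurj, hcard.symm⟩
  exact ⟨(LinearEquiv.ofBijective _ hbij).symm⟩

theorem nonempty_linearEquiv_pi_of_exact {p m t : ℕ} (hp : 0 < p) {A B : Type*}
    [AddCommGroup A] [AddCommGroup B] [Module (ZMod (p ^ (m + 1))) A]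
    [Module (ZMod (p ^ (m + 1 + 1))) M]
    (eA : A ≃ₗ[ZMod (p ^ (m + 1))] (Fin t → ZMod (p ^ (m + 1))))
    {a : Fin t → B} (ha : AddSubgroup.closure (range a) = ⊤) (hB : Nat.card B = p ^ t)
    {f : A →+ M} {g : M →+ B} (hf : Injective f) (hg : Surjective g) (hexact : g.ker = f.range)
    (htor : ∀ x : M, x ∈ f.range ↔ p ^ (m + 1) • x = 0) :
    Nonempty (M ≃ₗ[ZMod (p ^ (m + 1 + 1))] (Fin t → ZMod (p ^ (m + 1 + 1)))) := by
  have : NeZero (p ^ (m + 1)) := ⟨by positivity⟩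
  have : NeZero (p ^ (m + 1 + 1)) := ⟨by positivity⟩
  have : Finite A := .of_equiv _ eA.symm.toEquiv
  have hA : Nat.card A = (p ^ (m + 1)) ^ t := by simp [Nat.card_congr eA.toEquiv]
  have hM : Nat.card M = p ^ t * Nat.card A := by
    rw [AddMonoidHom.card_eq_mul_of_exact hf hg hexact, hB]
  have : Finite M := Nat.finite_of_card_ne_zero (by rw [hM, hA]; positivity)
  have hchar : ∀ x : M, p ^ (m + 1 + 1) • x = 0 := ZModModule.char_nsmul_eq_zero _
  have htorM : Nat.card {x : M // p • x = 0} ≤ p ^ t :=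
    (card_nsmul_eq_zero_le_of_injective p hf fun x hx =>
      (htor x).mpr (by rw [pow_succ, mul_smul, hx, smul_zero])).trans
    (card_nsmul_eq_zero_le_of_linearEquiv hp eA)
  have hdiv : ∀ x ∈ g.ker, ∃ z, p • z = x := by
    refine exists_nsmul_eq_of_card_le (fun x => ?_) htorM ?_
    · rw [hexact, htor, smul_smul, ← pow_succ, hchar]
    · rw [hexact, Nat.card_congr (f.ofInjective hf).toEquiv.symm, hM]
  choose b hb using fun i => hg (a i)
  have hS : AddSubgroup.closure (range b) = ⊤ := by
    refine AddSubgroup.eq_top_of_map_eq_top hchar hdiv ?_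
    rw [AddMonoidHom.map_closure, ← range_comp, show g ∘ b = a from funext hb, ha]
  refine nonempty_linearEquiv_pi_of_span_eq_top (b := b) ?_ ?_
  · rw [← AddSubgroup.toZModSubmodule_closure, hS, map_top]
  · rw [hM, hA, Nat.card_fun, Nat.card_zmod, Nat.card_eq_fintype_card, Fintype.card_fin,
      ← mul_pow, ← pow_succ']

end

/-- Inductive core of torsion-freeness of étale cohomology: if `H 0` (playing
the role of `H_1`) is free of rank `t` over `ℤ/pℤ` and for each `n` there is a
short exact sequence `0 → H n → H (n+1) → H 0 → 0` in which the image of `H n`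
is exactly the `p^(n+1)`-torsion of `H (n+1)`, then each `H n` (playing the
role of `H_{n+1}`) is a free `ℤ/p^(n+1)ℤ`-module of rank `t`. -/
theorem free_rank_of_exact_tower (p : ℕ) (hp : p.Prime) (t : ℕ)
    (H : ℕ → Type*) [∀ n, AddCommGroup (H n)] [∀ n, Module (ZMod (p ^ (n + 1))) (H n)]
    (e1 : H 0 ≃ₗ[ZMod (p ^ (0 + 1))] (Fin t → ZMod (p ^ (0 + 1))))
    (f : ∀ n, H n →+ H (n + 1)) (g : ∀ n, H (n + 1) →+ H 0)
    (hf : ∀ n, Function.Injective (f n))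
    (hg : ∀ n, Function.Surjective (g n))
    (hexact : ∀ n, (g n).ker = (f n).range)
    (htor : ∀ n, ∀ x : H (n + 1), x ∈ (f n).range ↔ p ^ (n + 1) • x = 0) :
    ∀ n, Nonempty (H n ≃ₗ[ZMod (p ^ (n + 1))] (Fin t → ZMod (p ^ (n + 1)))) := by
  have hcard : Nat.card (H 0) = p ^ t := by
    rw [Nat.card_congr e1.toEquiv, Nat.card_fun, Nat.card_zmod, Nat.card_eq_fintype_card,
      Fintype.card_fin, zero_add, pow_one]
  obtain ⟨a, ha⟩ := exists_closure_range_eq_top e1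
  intro n
  induction n with
  | zero => exact ⟨e1⟩
  | succ n ih =>
    obtain ⟨e⟩ := ih
    exact nonempty_linearEquiv_pi_of_exact hp.pos e ha hcard (hf n) (hg n) (hexact n) (htor n)
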